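/- arXiv:2006.14581 — 2 statements merged into one kernel-verified Lean document; each statement's English description precedes it below -/
import Mathlib

section
/- Ostrowski-type inequality, case of nested intervals: Let a ≤ c < d ≤ b with d − c < b − a, and set M = b − a, m = d − c. Then for every modulus of continuity ω, every real Banach space E, and every f ∈ H^ω([a,b],E), ‖(1/(b−a))∫_a^b f(t) dt − (1/(d−c))∫_c^d f(t) dt‖ ≤ ((M−m)/M²)·( ∫_0^{M(c−a)/(M−m)} ω(s) ds + ∫_0^{M(b−d)/(M−m)} ω(s) ds ). -/
/-!
Put `M = b - a`, `m = d - c` and `k = M / (M - m) > 1`. The homotheties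
`t ↦ t - k (t - c)` and `t ↦ t - k (t - d)`, of ratio `1 - k = -m / (M - m)`, map `[a, c]` onto
`[c, e]` and `[d, b]` onto `[e, d]` for a common point `e = a - k (a - c) = b - k (b - d)` of
`[c, d]`. Changing variables therefore writes `M⁻¹ ∫_a^b f - m⁻¹ ∫_c^d f` as `M⁻¹` times
`∫_a^c (f t - f (t - k (t - c))) dt + ∫_d^b (f t - f (t - k (t - d))) dt`. The displacements are
`k |t - c|` and `k |t - d|`, so the two integrals are bounded by `∫_a^c ω (k (c - t)) dt` and
`∫_d^b ω (k (t - d)) dt`, that is by `k⁻¹ ∫_0^{k (c - a)} ω` and `k⁻¹ ∫_0^{k (b - d)} ω`.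
-/
open MeasureTheory Set

/-- A modulus of continuity: `ω 0 = 0`, continuous, non-decreasing and subadditive on `[0, ∞)`. -/
def IsModulus (ω : ℝ → ℝ) : Prop :=
  ω 0 = 0 ∧ ContinuousOn ω (Set.Ici 0) ∧ MonotoneOn ω (Set.Ici 0) ∧
    ∀ s t : ℝ, 0 ≤ s → 0 ≤ t → ω (s + t) ≤ ω s + ω t

/-- The class `H^ω([a,b], E)`. -/
def HHolder {E : Type*} [NormedAddCommGroup E] (ω : ℝ → ℝ) (a b : ℝ) (f : ℝ → E) : Prop :=
  ∀ s ∈ Set.Icc a b, ∀ t ∈ Set.Icc a b, ‖f t - f s‖ ≤ ω |t - s|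

open intervalIntegral

section

variable {E : Type*} [NormedAddCommGroup E]

theorem HHolder.continuousOn {ω : ℝ → ℝ} {a b : ℝ} {f : ℝ → E} (hf : HHolder ω a b f)
    (hω0 : ω 0 = 0) (hωc : ContinuousWithinAt ω (Ici 0) 0) : ContinuousOn f (Icc a b) := by
  intro x hx
  refine Metric.continuousWithinAt_iff.2 fun ε hε => ?_
  obtain ⟨δ, hδ, hωδ⟩ := Metric.continuousWithinAt_iff.1 hωc ε hε
  refine ⟨δ, hδ, fun y hy hyx => ?_⟩
  have hsmall := hωδ (mem_Ici.2 (abs_nonneg (y - x))) (by simpa [Real.dist_eq] using hyx)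
  rw [hω0, Real.dist_eq, sub_zero] at hsmall
  calc dist (f y) (f x) = ‖f y - f x‖ := dist_eq_norm _ _
    _ ≤ ω |y - x| := hf x hx y hy
    _ < ε := (le_abs_self _).trans_lt hsmall

theorem antitone_sub_mul_sub {k : ℝ} (hk : 1 ≤ k) (x₀ : ℝ) :
    Antitone fun t : ℝ => t - k * (t - x₀) := fun s t hst => by nlinarith

variable [NormedSpace ℝ E]

theorem intervalIntegral.integral_comp_sub_mul_sub (f : ℝ → E) {k : ℝ} (hk : k ≠ 1)
    (x₀ p q : ℝ) :
    ∫ t in p..q, f (t - k * (t - x₀)) =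
      (1 - k)⁻¹ • ∫ x in p - k * (p - x₀)..q - k * (q - x₀), f x := by
  have h : ∀ t, t - k * (t - x₀) = (1 - k) * t + k * x₀ := fun t => by ring
  simp only [h]
  exact integral_comp_mul_add f (sub_ne_zero.2 hk.symm) _

theorem intervalIntegral.integral_comp_mul_abs_sub_right (g : ℝ → ℝ) {k p q : ℝ} (hk : 0 < k)
    (hpq : p ≤ q) : ∫ t in p..q, g (k * |t - q|) = k⁻¹ * ∫ s in (0 : ℝ)..k * (q - p), g s := by
  have h : EqOn (fun t => g (k * |t - q|)) (fun t => g (k * q - k * t)) (uIcc p q) := by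
    intro t ht
    rw [uIcc_of_le hpq] at ht
    simp only [abs_of_nonpos (sub_nonpos.2 ht.2)]
    ring_nf
  rw [integral_congr h, integral_comp_sub_mul g hk.ne', smul_eq_mul]
  ring_nf

theorem intervalIntegral.integral_comp_mul_abs_sub_left (g : ℝ → ℝ) {k p q : ℝ} (hk : 0 < k)
    (hpq : p ≤ q) : ∫ t in p..q, g (k * |t - p|) = k⁻¹ * ∫ s in (0 : ℝ)..k * (q - p), g s := by
  have h : EqOn (fun t => g (k * |t - p|)) (fun t => g (k * t - k * p)) (uIcc p q) := by
    intro t ht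
    rw [uIcc_of_le hpq] at ht
    simp only [abs_of_nonneg (sub_nonneg.2 ht.1)]
    ring_nf
  rw [integral_congr h, integral_comp_mul_sub g hk.ne', smul_eq_mul]
  ring_nf

theorem HHolder.norm_integral_sub_integral_comp_le {ω : ℝ → ℝ} {a b k x₀ p q : ℝ} {f : ℝ → E}
    (hf : HHolder ω a b f) (hfc : ContinuousOn f (Icc a b)) (hωc : ContinuousOn ω (Ici 0))
    (hk : 0 ≤ k) (hpq : p ≤ q) (hsub : Icc p q ⊆ Icc a b)
    (hmaps : MapsTo (fun t => t - k * (t - x₀)) (Icc p q) (Icc a b)) :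
    ‖(∫ t in p..q, f t) - ∫ t in p..q, f (t - k * (t - x₀))‖ ≤ ∫ t in p..q, ω (k * |t - x₀|) := by
  have hφ : ContinuousOn (fun t => f (t - k * (t - x₀))) (Icc p q) :=
    hfc.comp (by fun_prop) hmaps
  have hpoint : ∀ t ∈ Icc p q, ‖f t - f (t - k * (t - x₀))‖ ≤ ω (k * |t - x₀|) := by
    intro t ht
    simpa [abs_mul, abs_of_nonneg hk] using hf _ (hmaps ht) t (hsub ht)
  rw [← integral_sub ((hfc.mono hsub).intervalIntegrable_of_Icc hpq)
    (hφ.intervalIntegrable_of_Icc hpq)]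
  refine (intervalIntegral.norm_integral_le_integral_norm hpq).trans
    (integral_mono_on hpq ?_ ?_ hpoint)
  · exact ((hfc.mono hsub).sub hφ).norm.intervalIntegrable_of_Icc hpq
  · refine ContinuousOn.intervalIntegrable_of_Icc hpq ?_
    exact hωc.comp (by fun_prop) fun t _ => mul_nonneg hk (abs_nonneg _)

section Nested

variable {a b c d k : ℝ}

theorem nested_pivot_eq (hk : k * (b - a - (d - c)) = b - a) :
    a - k * (a - c) = b - k * (b - d) := by
  linear_combination hk

theorem nested_pivot_mem_Icc (hac : a ≤ c) (hdb : d ≤ b) (hk1 : 1 ≤ k)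
    (hk : k * (b - a - (d - c)) = b - a) : a - k * (a - c) ∈ Icc c d := by
  constructor
  · nlinarith
  · rw [nested_pivot_eq hk]; nlinarith

theorem average_sub_average_eq_of_nested {f : ℝ → E} (hac : a ≤ c) (hcd : c < d) (hdb : d ≤ b)
    (hk1 : 1 < k) (hk : k * (b - a - (d - c)) = b - a) (hf : IntervalIntegrable f volume a b) :
    ((b - a)⁻¹ • ∫ t in a..b, f t) - (d - c)⁻¹ • ∫ t in c..d, f t =
      (b - a)⁻¹ • (((∫ t in a..c, f t) - ∫ t in a..c, f (t - k * (t - c))) +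
        ((∫ t in d..b, f t) - ∫ t in d..b, f (t - k * (t - d)))) := by
  have hab : a ≤ b := hac.trans (hcd.le.trans hdb)
  have hint : ∀ p ∈ Icc a b, ∀ q ∈ Icc a b, IntervalIntegrable f volume p q := fun p hp q hq =>
    hf.mono_set (uIcc_subset_uIcc (by rwa [uIcc_of_le hab]) (by rwa [uIcc_of_le hab]))
  have hc : c ∈ Icc a b := ⟨hac, hcd.le.trans hdb⟩
  have hd : d ∈ Icc a b := ⟨hac.trans hcd.le, hdb⟩
  have he := nested_pivot_mem_Icc hac hdb hk1.le hk
  have he' : a - k * (a - c) ∈ Icc a b := ⟨hac.trans he.1, he.2.trans hdb⟩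
  have hcomp_left : ∫ t in a..c, f (t - k * (t - c)) =
      (1 - k)⁻¹ • ∫ x in a - k * (a - c)..c, f x := by
    rw [integral_comp_sub_mul_sub f hk1.ne', sub_self, mul_zero, sub_zero]
  have hcomp_right : ∫ t in d..b, f (t - k * (t - d)) =
      (1 - k)⁻¹ • ∫ x in d..a - k * (a - c), f x := by
    rw [integral_comp_sub_mul_sub f hk1.ne', sub_self, mul_zero, sub_zero, nested_pivot_eq hk]
  have hsplit : ∫ t in a..b, f t = (∫ t in a..c, f t) + (∫ t in c..d, f t) + ∫ t in d..b, f t := by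
    rw [integral_add_adjacent_intervals (hint a ⟨le_rfl, hab⟩ c hc) (hint c hc d hd),
      integral_add_adjacent_intervals (hint a ⟨le_rfl, hab⟩ d hd) (hint d hd b ⟨hab, le_rfl⟩)]
  have hsplit_inner : ∫ t in c..d, f t =
      -((∫ x in a - k * (a - c)..c, f x) + ∫ x in d..a - k * (a - c), f x) := by
    rw [add_comm, integral_add_adjacent_intervals (hint d hd _ he') (hint _ he' c hc),
      integral_symm c d, neg_neg]
  have hcoef : (b - a)⁻¹ - (d - c)⁻¹ = (b - a)⁻¹ * (1 - k)⁻¹ := by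
    have : b - a ≠ 0 := by linarith
    have : d - c ≠ 0 := by linarith
    have : 1 - k ≠ 0 := by linarith
    field_simp
    linear_combination hk
  rw [hcomp_left, hcomp_right, hsplit]
  calc _ = (b - a)⁻¹ • ((∫ t in a..c, f t) + ∫ t in d..b, f t) +
        ((b - a)⁻¹ - (d - c)⁻¹) • ∫ t in c..d, f t := by module
    _ = _ := by rw [hcoef, hsplit_inner]; module

theorem HHolder.norm_average_sub_average_le_of_nested {ω : ℝ → ℝ} {f : ℝ → E}
    (hf : HHolder ω a b f) (hfc : ContinuousOn f (Icc a b)) (hωc : ContinuousOn ω (Ici 0))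
    (hac : a ≤ c) (hcd : c < d) (hdb : d ≤ b) (hk1 : 1 < k)
    (hk : k * (b - a - (d - c)) = b - a) :
    ‖((b - a)⁻¹ • ∫ t in a..b, f t) - (d - c)⁻¹ • ∫ t in c..d, f t‖ ≤
      (b - a)⁻¹ * (k⁻¹ * (∫ s in (0 : ℝ)..k * (c - a), ω s) +
        k⁻¹ * ∫ s in (0 : ℝ)..k * (b - d), ω s) := by
  have he := nested_pivot_mem_Icc hac hdb hk1.le hk
  have hleft := hf.norm_integral_sub_integral_comp_le (x₀ := c) hfc hωc (by linarith) hac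
    (Icc_subset_Icc_right (hcd.le.trans hdb))
    ((antitone_sub_mul_sub hk1.le c).mapsTo_Icc.mono_right
      (Icc_subset_Icc (by simpa using hac) (he.2.trans hdb)))
  have hright := hf.norm_integral_sub_integral_comp_le (x₀ := d) hfc hωc (by linarith) hdb
    (Icc_subset_Icc_left (hac.trans hcd.le))
    ((antitone_sub_mul_sub hk1.le d).mapsTo_Icc.mono_right
      (Icc_subset_Icc (by rw [← nested_pivot_eq hk]; exact hac.trans he.1) (by simpa using hdb)))
  rw [integral_comp_mul_abs_sub_right ω (by linarith) hac] at hleft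
  rw [integral_comp_mul_abs_sub_left ω (by linarith) hdb] at hright
  rw [average_sub_average_eq_of_nested hac hcd hdb hk1 hk
    (hfc.intervalIntegrable_of_Icc (hac.trans (hcd.le.trans hdb))), norm_smul,
    Real.norm_of_nonneg (inv_nonneg.2 (by linarith))]
  exact mul_le_mul_of_nonneg_left ((norm_add_le _ _).trans (add_le_add hleft hright))
    (inv_nonneg.2 (by linarith))

end Nested

end

theorem ostrowski_nested_general
    {E : Type*} [NormedAddCommGroup E] [NormedSpace ℝ E]
    (a b c d : ℝ) (hac : a ≤ c) (hcd : c < d) (hdb : d ≤ b) (hlt : d - c < b - a)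
    (M m : ℝ) (hM : M = b - a) (hm : m = d - c)
    (ω : ℝ → ℝ) (hω : IsModulus ω)
    (f : ℝ → E) (hf : HHolder ω a b f) :
    ‖((b - a)⁻¹ • ∫ t in a..b, f t) - (d - c)⁻¹ • ∫ t in c..d, f t‖ ≤
      ((M - m) / M ^ 2) *
        ((∫ s in (0:ℝ)..(M * (c - a) / (M - m)), ω s) +
          ∫ s in (0:ℝ)..(M * (b - d) / (M - m)), ω s) := by
  obtain ⟨hω0, hωc, -, -⟩ := hω
  subst hM hm
  have hr : 0 < b - a - (d - c) := sub_pos.2 hlt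
  set k := (b - a) / (b - a - (d - c)) with hk_def
  have hk : k * (b - a - (d - c)) = b - a := div_mul_cancel₀ _ hr.ne'
  have hk1 : 1 < k := (one_lt_div hr).2 (by linarith)
  have hfc := hf.continuousOn hω0 (hωc 0 self_mem_Ici)
  have hkca : k * (c - a) = (b - a) * (c - a) / (b - a - (d - c)) := by rw [hk_def]; ring
  have hkbd : k * (b - d) = (b - a) * (b - d) / (b - a - (d - c)) := by rw [hk_def]; ring
  calc _ ≤ _ := hf.norm_average_sub_average_le_of_nested hfc hωc hac hcd hdb hk1 hk
    _ = _ := by rw [hkca, hkbd, hk_def]; field_simp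

/-- Ostrowski-type inequality, case of nested intervals `[c,d] ⊂ [a,b]`. -/
theorem ostrowski_nested
    {E : Type*} [NormedAddCommGroup E] [NormedSpace ℝ E] [CompleteSpace E]
    (a b c d : ℝ) (hac : a ≤ c) (hcd : c < d) (hdb : d ≤ b) (hlt : d - c < b - a)
    (M m : ℝ) (hM : M = b - a) (hm : m = d - c)
    (ω : ℝ → ℝ) (hω : IsModulus ω)
    (f : ℝ → E) (hf : HHolder ω a b f) :
    ‖((b - a)⁻¹ • ∫ t in a..b, f t) - (d - c)⁻¹ • ∫ t in c..d, f t‖ ≤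
      ((M - m) / M ^ 2) *
        ((∫ s in (0:ℝ)..(M * (c - a) / (M - m)), ω s) +
          ∫ s in (0:ℝ)..(M * (b - d) / (M - m)), ω s) :=
  ostrowski_nested_general a b c d hac hcd hdb hlt M m hM hm ω hω f hf
end

section
/- Ostrowski-type inequality, case of overlapping intervals: Let a < b, c < d with a ≤ c ≤ b ≤ d, and set M = max{b−a, d−c}, m = min{b−a, d−c}. Then for every modulus of continuity ω, every real Banach space E, and every f ∈ H^ω([a,d],E), ‖(1/(b−a))∫_a^b f(t) dt − (1/(d−c))∫_c^d f(t) dt‖ ≤ (1/(M+m))·∫_{M(b−c)/m}^{d−a} ω(s) ds + ((M−m)/M²)·∫_0^{M(b−c)/m} ω(s) ds. -/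
/-!
By the reflection `t ↦ a + d - t` we may assume `m = d - c ≤ M = b - a`. With `L = M (b - c) / m`
the point `b - L` lies in `[a, c]`, and the difference of the averages is a positive combination of
`ρ₂ ∫_a^{b-L} f - ρ₁ ∫_b^d f` and `r₂ ∫_{b-L}^c f - r₁ ∫_c^b f`, where `(ρ₁, ρ₂) = (M, m) / (M + m)`
and `(r₁, r₂) = (M - m, m) / M` are convex weights. In each pair, parametrise both integrals over
`[0, Λ]` by running away from the inner endpoints `p ≤ q` at speeds `r₁` and `r₂`: the two points
at parameter `u` are exactly `q - p + u` apart, so the `H^ω` bound integrates to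
`r₁ r₂ ∫_{q-p}^{q-p+Λ} ω`.
-/

open MeasureTheory Set

open Filter Topology intervalIntegral

section

variable {E : Type*} [NormedAddCommGroup E] {ω : ℝ → ℝ} {a d : ℝ} {f : ℝ → E}

theorem IsModulus.intervalIntegrable (hω : IsModulus ω) {x y : ℝ} (hx : 0 ≤ x) (hy : 0 ≤ y) :
    IntervalIntegrable ω volume x y :=
  (hω.2.1.mono fun _ hz => le_trans (le_min hx hy) hz.1).intervalIntegrable

theorem HHolder.continuousOn_s3 (hω : IsModulus ω) (hf : HHolder ω a d f) :
    ContinuousOn f (Icc a d) := by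
  intro t ht
  rw [ContinuousWithinAt, tendsto_iff_norm_sub_tendsto_zero]
  have hdist : Tendsto (fun s => |s - t|) (𝓝[Icc a d] t) (𝓝[Ici 0] 0) := by
    refine tendsto_nhdsWithin_iff.2 ⟨?_, Eventually.of_forall fun s => abs_nonneg (s - t)⟩
    have h : Tendsto (fun s => |s - t|) (𝓝 t) (𝓝 0) := by
      simpa using ((continuous_sub_right t).abs.tendsto t)
    exact h.mono_left nhdsWithin_le_nhds
  have hω0 : Tendsto (fun s => ω |s - t|) (𝓝[Icc a d] t) (𝓝 0) :=
    hω.1 ▸ (hω.2.1 0 self_mem_Ici).tendsto.comp hdist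
  refine squeeze_zero' (Eventually.of_forall fun _ => norm_nonneg _) ?_ hω0
  filter_upwards [self_mem_nhdsWithin] with s hs using hf t ht s hs

theorem HHolder.comp_reflect (hf : HHolder ω a d f) : HHolder ω a d (fun t => f (a + d - t)) := by
  intro s hs t ht
  have hmem : ∀ x ∈ Icc a d, a + d - x ∈ Icc a d := fun x hx =>
    ⟨by linarith [hx.2], by linarith [hx.1]⟩
  simpa [abs_sub_comm] using hf _ (hmem s hs) _ (hmem t ht)

theorem HHolder.norm_smul_integral_sub_smul_integral_le [NormedSpace ℝ E]
    (hω : IsModulus ω) (hf : HHolder ω a d f) {p q r₁ r₂ Λ : ℝ} (hr₁ : 0 ≤ r₁) (hr₂ : 0 ≤ r₂)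
    (hr : r₁ + r₂ = 1) (hΛ : 0 ≤ Λ) (ha : a ≤ p - r₁ * Λ) (hpq : p ≤ q) (hd : q + r₂ * Λ ≤ d) :
    ‖r₂ • (∫ t in (p - r₁ * Λ)..p, f t) - r₁ • ∫ t in q..(q + r₂ * Λ), f t‖ ≤
      r₁ * r₂ * ∫ s in (q - p)..(q - p + Λ), ω s := by
  have hfc := hf.continuousOn_s3 hω
  have hleft : ∀ u ∈ Icc 0 Λ, p - r₁ * u ∈ Icc a d := fun u hu =>
    ⟨by nlinarith [hu.2], by nlinarith [hu.1]⟩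
  have hright : ∀ u ∈ Icc 0 Λ, q + r₂ * u ∈ Icc a d := fun u hu =>
    ⟨by nlinarith [hu.1], by nlinarith [hu.2]⟩
  have hi₁ : IntervalIntegrable (fun u => f (p - r₁ * u)) volume 0 Λ :=
    (hfc.comp (by fun_prop) hleft).intervalIntegrable_of_Icc hΛ
  have hi₂ : IntervalIntegrable (fun u => f (q + r₂ * u)) volume 0 Λ :=
    (hfc.comp (by fun_prop) hright).intervalIntegrable_of_Icc hΛ
  have hreparam : r₂ • (∫ t in (p - r₁ * Λ)..p, f t) - r₁ • ∫ t in q..(q + r₂ * Λ), f t =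
      (r₁ * r₂) • ∫ u in 0..Λ, f (p - r₁ * u) - f (q + r₂ * u) := by
    have h₁ := smul_integral_comp_sub_mul f r₁ p (a := 0) (b := Λ)
    have h₂ := smul_integral_comp_add_mul f r₂ q (a := 0) (b := Λ)
    simp only [mul_zero, sub_zero, add_zero] at h₁ h₂
    rw [integral_sub hi₁ hi₂, ← h₁, ← h₂, smul_smul, smul_smul, smul_sub, mul_comm r₂ r₁]
  have hpointwise : ∀ u ∈ Ioc 0 Λ, ‖f (p - r₁ * u) - f (q + r₂ * u)‖ ≤ ω (q - p + u) := by
    intro u hu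
    have hdist : |q + r₂ * u - (p - r₁ * u)| = q - p + u := by
      rw [abs_of_nonneg] <;> nlinarith [hu.1]
    rw [norm_sub_rev, ← hdist]
    exact hf _ (hleft u (Ioc_subset_Icc_self hu)) _ (hright u (Ioc_subset_Icc_self hu))
  have hshift : ∫ s in (q - p)..(q - p + Λ), ω s = ∫ u in 0..Λ, ω (q - p + u) := by
    simp [integral_comp_add_left ω (q - p)]
  rw [hreparam, norm_smul, Real.norm_of_nonneg (mul_nonneg hr₁ hr₂), hshift]
  refine mul_le_mul_of_nonneg_left (norm_integral_le_of_norm_le hΛ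
    (Eventually.of_forall hpointwise) ?_) (mul_nonneg hr₁ hr₂)
  simpa using (hω.intervalIntegrable (sub_nonneg.2 hpq) (by linarith : 0 ≤ q - p + Λ)).comp_add_left
    (q - p)

theorem inv_smul_integral_sub_inv_smul_integral_eq [NormedSpace ℝ E] (hf : IntegrableOn f (Icc a d))
    {b c t M m : ℝ} (hab : a ≤ b) (hbd : b ≤ d) (hac : a ≤ c) (hcd : c ≤ d)
    (hat : a ≤ t) (htd : t ≤ d)
    (hM : b - a = M) (hm : d - c = m) (hM0 : 0 < M) (hm0 : 0 < m) :
    ((b - a)⁻¹ • ∫ x in a..b, f x) - (d - c)⁻¹ • ∫ x in c..d, f x =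
      ((M + m) / (M * m)) •
          ((m / (M + m)) • (∫ x in a..t, f x) - (M / (M + m)) • ∫ x in b..d, f x) +
        (1 / m) • ((m / M) • (∫ x in t..c, f x) - ((M - m) / M) • ∫ x in c..b, f x) := by
  have hint : ∀ x ∈ Icc a d, ∀ y ∈ Icc a d, IntervalIntegrable f volume x y := fun x hx y hy =>
    (hf.mono_set (uIcc_subset_Icc hx hy)).intervalIntegrable
  have ha : a ∈ Icc a d := ⟨le_rfl, hab.trans hbd⟩
  have hb : b ∈ Icc a d := ⟨hab, hbd⟩
  have hc : c ∈ Icc a d := ⟨hac, hcd⟩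
  have hd : d ∈ Icc a d := ⟨hab.trans hbd, le_rfl⟩
  have ht : t ∈ Icc a d := ⟨hat, htd⟩
  rw [← integral_add_adjacent_intervals (hint a ha t ht) (hint t ht b hb),
    ← integral_add_adjacent_intervals (hint t ht c hc) (hint c hc b hb),
    ← integral_add_adjacent_intervals (hint c hc b hb) (hint b hb d hd), hM, hm]
  match_scalars <;> field_simp; ring

theorem ostrowski_overlapping_of_le [NormedSpace ℝ E] (hω : IsModulus ω) (hf : HHolder ω a d f)
    {b c M m : ℝ} (hcd : c < d) (hac : a ≤ c) (hcb : c ≤ b) (hbd : b ≤ d)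
    (hM : b - a = M) (hm : d - c = m) (hmM : m ≤ M) :
    ‖((b - a)⁻¹ • ∫ t in a..b, f t) - (d - c)⁻¹ • ∫ t in c..d, f t‖ ≤
      (1 / (M + m)) * (∫ s in (M * (b - c) / m)..(d - a), ω s) +
        ((M - m) / M ^ 2) * ∫ s in (0:ℝ)..(M * (b - c) / m), ω s := by
  have hm0 : 0 < m := by linarith
  have hM0 : 0 < M := by linarith
  set L := M * (b - c) / m
  have hLm : L * m = M * (b - c) := div_mul_cancel₀ _ hm0.ne'
  have hL0 : 0 ≤ L := by positivity
  have hLle : L ≤ d - a := by nlinarith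
  have hLM : L ≤ M := by nlinarith
  have hsplit := inv_smul_integral_sub_inv_smul_integral_eq (hf.continuousOn_s3 hω).integrableOn_Icc
    (t := b - L) (by linarith) hbd hac hcd.le (by linarith) (by linarith) hM hm hM0 hm0
  have hc₁ : c - (M - m) / M * L = b - L := by field_simp; linear_combination hLm
  have hc₂ : c + m / M * L = b := by field_simp; linear_combination hLm
  have hcentre := hf.norm_smul_integral_sub_smul_integral_le hω (p := c) (q := c) (Λ := L)
    (r₁ := (M - m) / M) (r₂ := m / M) (div_nonneg (by linarith) hM0.le) (by positivity)
    (by field_simp; ring) hL0 (by linarith) le_rfl (by linarith)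
  have ho₁ : b - L - M / (M + m) * (d - a - L) = a := by
    field_simp; linear_combination -hLm + m * hM - M * hm
  have ho₂ : b + m / (M + m) * (d - a - L) = d := by
    field_simp; linear_combination -hLm + m * hM - M * hm
  have houter := hf.norm_smul_integral_sub_smul_integral_le hω (p := b - L) (q := b)
    (Λ := d - a - L) (r₁ := M / (M + m)) (r₂ := m / (M + m)) (by positivity) (by positivity)
    (by field_simp) (by linarith) ho₁.ge (by linarith) ho₂.le
  rw [hc₁, hc₂, sub_self, zero_add] at hcentre
  rw [ho₁, ho₂, sub_sub_cancel, add_sub_cancel] at houter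
  rw [hsplit]
  calc _ ≤ (M + m) / (M * m) * (M / (M + m) * (m / (M + m)) * ∫ s in L..(d - a), ω s) +
        1 / m * ((M - m) / M * (m / M) * ∫ s in (0:ℝ)..L, ω s) := by
          refine (norm_add_le _ _).trans (add_le_add ?_ ?_)
          · rw [norm_smul, Real.norm_of_nonneg (by positivity)]
            gcongr
          · rw [norm_smul, Real.norm_of_nonneg (by positivity)]
            gcongr
    _ = _ := by field_simp

end

theorem ostrowski_overlapping_general
    {E : Type*} [NormedAddCommGroup E] [NormedSpace ℝ E]
    (a b c d : ℝ) (hab : a < b) (hcd : c < d) (hac : a ≤ c) (hcb : c ≤ b) (hbd : b ≤ d)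
    (M m : ℝ) (hM : M = max (b - a) (d - c)) (hm : m = min (b - a) (d - c))
    (ω : ℝ → ℝ) (hω : IsModulus ω)
    (f : ℝ → E) (hf : HHolder ω a d f) :
    ‖((b - a)⁻¹ • ∫ t in a..b, f t) - (d - c)⁻¹ • ∫ t in c..d, f t‖ ≤
      (1 / (M + m)) * (∫ s in (M * (b - c) / m)..(d - a), ω s) +
        ((M - m) / M ^ 2) * ∫ s in (0:ℝ)..(M * (b - c) / m), ω s := by
  rcases le_total (d - c) (b - a) with hle | hle
  · exact ostrowski_overlapping_of_le hω hf hcd hac hcb hbd (by rw [hM, max_eq_left hle])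
      (by rw [hm, min_eq_right hle]) (hm ▸ hM ▸ min_le_max)
  · have h := ostrowski_overlapping_of_le (b := a + d - c) (c := a + d - b) hω hf.comp_reflect
      (by linarith) (by linarith) (by linarith) (by linarith)
      (by rw [hM, max_eq_right hle]; ring) (by rw [hm, min_eq_left hle]; ring)
      (hm ▸ hM ▸ min_le_max)
    rwa [integral_comp_sub_left (fun t => f t), integral_comp_sub_left (fun t => f t),
      add_sub_cancel_left, add_sub_cancel_right, sub_sub_cancel, sub_sub_cancel,
      show d - (a + d - b) = b - a by ring, show a + d - c - a = d - c by ring,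
      show a + d - c - (a + d - b) = b - c by ring, norm_sub_rev] at h

/-- Ostrowski-type inequality, case of overlapping intervals (`a ≤ c ≤ b ≤ d`). -/
theorem ostrowski_overlapping
    {E : Type*} [NormedAddCommGroup E] [NormedSpace ℝ E] [CompleteSpace E]
    (a b c d : ℝ) (hab : a < b) (hcd : c < d) (hac : a ≤ c) (hcb : c ≤ b) (hbd : b ≤ d)
    (M m : ℝ) (hM : M = max (b - a) (d - c)) (hm : m = min (b - a) (d - c))
    (ω : ℝ → ℝ) (hω : IsModulus ω)
    (f : ℝ → E) (hf : HHolder ω a d f) :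
    ‖((b - a)⁻¹ • ∫ t in a..b, f t) - (d - c)⁻¹ • ∫ t in c..d, f t‖ ≤
      (1 / (M + m)) * (∫ s in (M * (b - c) / m)..(d - a), ω s) +
        ((M - m) / M ^ 2) * ∫ s in (0:ℝ)..(M * (b - c) / m), ω s :=
  ostrowski_overlapping_general a b c d hab hcd hac hcb hbd M m hM hm ω hω f hf
end
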